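/- arXiv:2202.02239 — 2 statements merged into one kernel-verified Lean document; each statement's English description precedes it below -/
import Mathlib

section
/- For every count vector a_s = (a_s(0), …, a_s(m−1)) of nonnegative integers with M_s = Σ_j a_s(j) ≥ 1, the Krichevsky–Trofimov estimated probability P_e(a_s) satisfies log P_e(a_s) ≤ Σ_j a_s(j) log(a_s(j)/M_s) − ((m−1)/2) log(M_s/(2π)) − log(π^{m/2}/Γ(m/2)). -/
open Real

noncomputable section

/-- The Krichevsky–Trofimov estimated probability
`P_e(a) = [∏_j (1/2)(3/2)···(a(j)-1/2)] / [(m/2)(m/2+1)···(m/2+M-1)]`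
of a count vector `a`, where `M = ∑_j a(j)`. -/
def ktProb (m : ℕ) (a : Fin m → ℕ) : ℝ :=
  (∏ j, ∏ i ∈ Finset.range (a j), ((i : ℝ) + 1 / 2)) /
    ∏ i ∈ Finset.range (∑ j, a j), ((m : ℝ) / 2 + i)

end

/-!
Both products in `P_e` are ratios of Gamma values, `∏_{i<n} (x + i) = Γ(x + n) / Γ(x)`, so
`log P_e(a) = ∑_j (log Γ(a_j + 1/2) - log Γ(1/2)) - (log Γ(m/2 + M) - log Γ(m/2))`.
Each numerator term is bounded above by Stirling's formula in the form
`Γ(a + 1/2) = √(2π) (a/e)^a · s(2a)/s(a) ≤ √(2π) (a/e)^a`, `s` being the (decreasing) Stirling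
sequence. The denominator term is bounded below by log-convexity of `Γ`: the slopes of `log Γ`
beyond `M` are at least `log Γ(M + 1) - log Γ(M) = log M`, so for `m ≥ 2`
`log Γ(M + m/2) ≥ log M! + (m/2 - 1) log M`, and `M!` is bounded below by Stirling.
The resulting inequality is linear in the logarithms.
-/

open Finset
open scoped Nat

namespace Stirling

theorem stirlingSeq_pos {n : ℕ} (hn : n ≠ 0) : 0 < stirlingSeq n := by
  obtain ⟨k, rfl⟩ := Nat.exists_eq_succ_of_ne_zero hn
  exact stirlingSeq'_pos k

theorem stirlingSeq_two_mul_le {n : ℕ} (hn : n ≠ 0) : stirlingSeq (2 * n) ≤ stirlingSeq n := by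
  obtain ⟨k, rfl⟩ := Nat.exists_eq_succ_of_ne_zero hn
  have h := stirlingSeq'_antitone (show k ≤ 2 * k + 1 by omega)
  rwa [show 2 * k.succ = (2 * k + 1).succ by omega]

theorem factorial_eq_stirlingSeq_mul {n : ℕ} (hn : n ≠ 0) :
    (n ! : ℝ) = stirlingSeq n * (√(2 * n) * (n / exp 1) ^ n) := by
  rw [stirlingSeq, div_mul_cancel₀ _ (by positivity)]

end Stirling

namespace Real

theorem Gamma_add_nat_eq_mul_prod {x : ℝ} (hx : 0 < x) (n : ℕ) :
    Gamma (x + n) = Gamma x * ∏ i ∈ range n, (x + i) := by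
  induction n with
  | zero => simp
  | succ n ih =>
    rw [Nat.cast_succ, ← add_assoc, Gamma_add_one (by positivity), ih, prod_range_succ]
    ring

theorem log_prod_range_add {x : ℝ} (hx : 0 < x) (n : ℕ) :
    log (∏ i ∈ range n, (x + i)) = log (Gamma (x + n)) - log (Gamma x) := by
  rw [Gamma_add_nat_eq_mul_prod hx, log_mul (Gamma_pos_of_pos hx).ne', add_sub_cancel_left]
  exact prod_ne_zero_iff.mpr fun i _ => by positivity

theorem log_Gamma_add_one_add_mul_log_le {x t : ℝ} (hx : 0 < x) (ht : 0 ≤ t) :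
    log (Gamma (x + 1)) + t * log x ≤ log (Gamma (x + 1 + t)) := by
  rcases ht.eq_or_lt with rfl | ht
  · simp
  have hslope := convexOn_log_Gamma.slope_mono_adjacent (Set.mem_Ioi.mpr hx)
    (Set.mem_Ioi.mpr (by linarith : 0 < x + 1 + t)) (lt_add_one x) (lt_add_of_pos_right _ ht)
  have hstep : log (Gamma (x + 1)) - log (Gamma x) = log x := by
    rw [Gamma_add_one hx.ne', log_mul hx.ne' (Gamma_pos_of_pos hx).ne', add_sub_cancel_right]
  simp only [Function.comp_apply, add_sub_cancel_left, div_one, hstep] at hslope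
  rw [le_div_iff₀ ht] at hslope
  linarith

theorem le_log_Gamma_nat_add {n : ℕ} (hn : n ≠ 0) {s : ℝ} (hs : 1 ≤ s) :
    log (2 * π) / 2 + (n + s - 1 / 2) * log n - n ≤ log (Gamma (n + s)) := by
  have hstirling := Stirling.le_log_factorial_stirling hn
  have hconvex := log_Gamma_add_one_add_mul_log_le (x := n) (by positivity) (sub_nonneg.mpr hs)
  rw [Gamma_nat_eq_factorial, add_add_sub_cancel] at hconvex
  linarith

theorem Gamma_nat_add_half_mul_factorial (a : ℕ) :
    Gamma (a + 1 / 2) * a ! = √π * (2 * a)! / 4 ^ a := by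
  have h := Gamma_mul_Gamma_add_half (a + 1 / 2)
  have h4 : (2 : ℝ) ^ (2 * a) = 4 ^ a := by rw [pow_mul]; norm_num
  rw [show (a : ℝ) + 1 / 2 + 1 / 2 = a + 1 by ring, show 2 * ((a : ℝ) + 1 / 2) = (2 * a : ℕ) + 1 by
    push_cast; ring, Gamma_nat_eq_factorial, Gamma_nat_eq_factorial,
    show (1 : ℝ) - ((2 * a : ℕ) + 1) = -(2 * a : ℕ) by ring, rpow_neg zero_le_two,
    rpow_natCast, h4] at h
  rw [h]
  ring

theorem Gamma_nat_add_half_eq_stirlingSeq {a : ℕ} (ha : a ≠ 0) :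
    Gamma (a + 1 / 2) =
      √(2 * π) * (a / exp 1) ^ a * (Stirling.stirlingSeq (2 * a) / Stirling.stirlingSeq a) := by
  have hS := Stirling.stirlingSeq_pos ha
  have h := Gamma_nat_add_half_mul_factorial a
  rw [Stirling.factorial_eq_stirlingSeq_mul ha,
    Stirling.factorial_eq_stirlingSeq_mul (by positivity)] at h
  have h2 : √(2 * ((2 * a : ℕ) : ℝ)) = √2 * √(2 * a) := by
    rw [← sqrt_mul zero_le_two]; push_cast; ring_nf
  have h4 : (((2 * a : ℕ) : ℝ) / exp 1) ^ (2 * a) = 4 ^ a * ((a / exp 1) ^ a) ^ 2 := by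
    rw [Nat.cast_mul, Nat.cast_two, mul_div_assoc, mul_pow, pow_mul (2 : ℝ), pow_mul' (_ / _)]
    norm_num
  rw [h2, h4] at h
  rw [sqrt_mul zero_le_two π, ← mul_div_assoc, eq_div_iff hS.ne']
  apply mul_right_cancel₀ (b := √(2 * a) * (a / exp 1) ^ a) (by positivity)
  rw [mul_assoc, h]
  field_simp

theorem Gamma_nat_add_half_le (a : ℕ) : Gamma (a + 1 / 2) ≤ √(2 * π) * (a / exp 1) ^ a := by
  rcases eq_or_ne a 0 with rfl | ha
  · rw [Nat.cast_zero, zero_add, pow_zero, mul_one, Gamma_one_half_eq]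
    exact sqrt_le_sqrt (by linarith [pi_pos])
  rw [Gamma_nat_add_half_eq_stirlingSeq ha]
  exact mul_le_of_le_one_right (by positivity)
    (div_le_one_of_le₀ (Stirling.stirlingSeq_two_mul_le ha) (Stirling.stirlingSeq_pos ha).le)

theorem log_Gamma_nat_add_half_le (a : ℕ) :
    log (Gamma (a + 1 / 2)) ≤ log (2 * π) / 2 + a * log a - a := by
  have hlog := log_le_log (Gamma_pos_of_pos (by positivity)) (Gamma_nat_add_half_le a)
  rcases eq_or_ne a 0 with rfl | ha
  · rw [pow_zero, mul_one, log_sqrt (by positivity)] at hlog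
    simpa using hlog
  rw [log_mul (by positivity) (by positivity), log_sqrt (by positivity), log_pow,
    log_div (by positivity) (exp_pos 1).ne', log_exp] at hlog
  linarith

theorem sum_mul_log_div {ι : Type*} (s : Finset ι) (x : ι → ℝ) {y : ℝ} (hy : y ≠ 0) :
    ∑ i ∈ s, x i * log (x i / y) = ∑ i ∈ s, x i * log (x i) - (∑ i ∈ s, x i) * log y := by
  rw [sum_mul, ← sum_sub_distrib]
  refine sum_congr rfl fun i _ => ?_
  rcases eq_or_ne (x i) 0 with hx | hx
  · simp [hx]
  · rw [log_div hx hy, mul_sub]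

end Real

theorem log_ktProb {m : ℕ} (hm : 0 < m) (a : Fin m → ℕ) :
    log (ktProb m a) =
      ∑ j, (log (Gamma (a j + 1 / 2)) - log (Gamma (1 / 2))) -
        (log (Gamma (m / 2 + (∑ j, a j : ℕ))) - log (Gamma (m / 2))) := by
  have hnum : ∀ j, ∏ i ∈ range (a j), ((i : ℝ) + 1 / 2) ≠ 0 := fun j =>
    prod_ne_zero_iff.mpr fun i _ => by positivity
  have hden : ∏ i ∈ range (∑ j, a j), ((m : ℝ) / 2 + i) ≠ 0 :=
    prod_ne_zero_iff.mpr fun i _ => by positivity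
  rw [ktProb, log_div (prod_ne_zero_iff.mpr fun j _ => hnum j) hden,
    log_prod fun j _ => hnum j, log_prod_range_add (by positivity)]
  congr 1
  refine sum_congr rfl fun j _ => ?_
  simp only [add_comm _ (1 / 2 : ℝ), log_prod_range_add one_half_pos]

/-- upper bound on the log of the KT estimated probability:
`log P_e(a) ≤ ∑_j a(j) log(a(j)/M) − ((m−1)/2) log(M/(2π)) − log(π^{m/2}/Γ(m/2))`. -/
theorem ktProb_log_upper_bound (m : ℕ) (hm : 2 ≤ m) (a : Fin m → ℕ)
    (hM : 1 ≤ ∑ j, a j) :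
    Real.log (ktProb m a) ≤
      (∑ j, (a j : ℝ) * Real.log ((a j : ℝ) / (∑ j, a j : ℕ))) -
        ((m : ℝ) - 1) / 2 * Real.log ((∑ j, a j : ℕ) / (2 * π)) -
        Real.log (π ^ ((m : ℝ) / 2) / Real.Gamma ((m : ℝ) / 2)) := by
  set M := ∑ j, a j with hMdef
  have hM0 : (M : ℝ) ≠ 0 := Nat.cast_ne_zero.mpr (by omega)
  have hnum : ∑ j, log (Gamma (a j + 1 / 2)) ≤ ∑ j, (log (2 * π) / 2 + a j * log (a j) - a j) :=
    sum_le_sum fun j _ => log_Gamma_nat_add_half_le (a j)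
  have hden := le_log_Gamma_nat_add (n := M) (by omega) (s := m / 2)
    (by rw [le_div_iff₀ two_pos]; exact_mod_cast hm)
  rw [log_ktProb (by omega), sum_mul_log_div _ _ hM0, log_div hM0 (by positivity),
    log_div (by positivity) (Gamma_pos_of_pos (by positivity)).ne', log_rpow pi_pos,
    Gamma_one_half_eq, log_sqrt pi_pos.le, add_comm (m / 2 : ℝ)]
  simp only [sum_sub_distrib, sum_add_distrib, sum_const, card_univ, Fintype.card_fin,
    nsmul_eq_mul] at hnum ⊢
  rw [← Nat.cast_sum, ← hMdef] at hnum ⊢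
  linarith
end

section
/- Given data x, maximum depth D ≥ 0, and β ∈ (0,1), define branching probabilities P_{b,s} = β P_{e,s}/P_{w,s} for contexts s of length < D, where P_{w,s} satisfies the recursion P_{w,s} = P_{e,s} for s at depth D and P_{w,s} = β P_{e,s} + (1−β) Π_{j=0}^{m−1} P_{w,sj} otherwise. Then the branching process which, starting at the root, marks each examined node s at depth < D as a leaf with probability P_{b,s} or adds all m of its children with probability 1−P_{b,s} (independently across nodes), generates any tree T ∈ T(D) with probability exactly equal to the Bayesian posterior π(T|x) = π_D(T;β) Π_{s∈T} P_{e,s} / P_{w,λ}. -/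
open MeasureTheory Filter Real
open scoped Topology ENNReal Classical

noncomputable section

inductive MTree (m : ℕ) : Type
  | leaf : MTree m
  | node : (Fin m → MTree m) → MTree m

namespace MTree

variable {m : ℕ}

def depth : MTree m → ℕ
  | leaf => 0
  | node f => (Finset.univ.sup fun j => depth (f j)) + 1

def numLeaves : MTree m → ℕ
  | leaf => 1
  | node f => ∑ j, numLeaves (f j)

def leavesAtDepth : MTree m → ℕ → ℕ
  | leaf, 0 => 1
  | leaf, _ + 1 => 0
  | node _, 0 => 0
  | node f, d + 1 => ∑ j, leavesAtDepth (f j) d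

def nodesAtDepth : MTree m → ℕ → ℕ
  | _, 0 => 1
  | leaf, _ + 1 => 0
  | node f, d + 1 => ∑ j, nodesAtDepth (f j) d

end MTree

/-- The BCT prior `π_D(T;β) = α^{|T|-1} β^{|T|-L_D(T)}` with `α = (1-β)^{1/(m-1)}`. -/
def priorBCT (m D : ℕ) (β : ℝ) (T : MTree m) : ℝ :=
  ((1 - β) ^ (((m : ℝ) - 1)⁻¹)) ^ (T.numLeaves - 1) * β ^ (T.numLeaves - T.leavesAtDepth D)

/-- Probability that the Galton–Watson process with offspring distribution (β,1-β) on {0,m},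
stopped at generation D, produces the tree `T`. -/
def gwStopped {m : ℕ} (β : ℝ) : ℕ → MTree m → ℝ
  | 0, .leaf => 1
  | 0, .node _ => 0
  | _ + 1, .leaf => β
  | D + 1, .node f => (1 - β) * ∏ j, gwStopped β D (f j)

/-- The weighted probabilities `P_{w,s}`: with remaining depth budget 0 (i.e. at maximal
depth D), `P_{w,s} = P_{e,s}`; otherwise `P_{w,s} = β P_{e,s} + (1-β) ∏_j P_{w,sj}`. -/
def pw {m : ℕ} (β : ℝ) (Pe : List (Fin m) → ℝ) : ℕ → List (Fin m) → ℝ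
  | 0, s => Pe s
  | D + 1, s => β * Pe s + (1 - β) * ∏ j, pw β Pe D (s ++ [j])

/-- The branching probabilities `P_{b,s} = β P_{e,s} / P_{w,s}` for contexts of length < D
(positive remaining budget), with the convention `P_{b,s} = 1` at maximal depth. -/
def pb {m : ℕ} (β : ℝ) (Pe : List (Fin m) → ℝ) : ℕ → List (Fin m) → ℝ
  | 0, _ => 1
  | D + 1, s => β * Pe s / pw β Pe (D + 1) s

/-- `∏_{s ∈ T} P_{e,s}`: product of the estimated probabilities over the leaf contexts of
the tree `T` rooted at context `s`; this is the marginal likelihood `P(x|T)`. -/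
def leafProd {m : ℕ} (Pe : List (Fin m) → ℝ) : List (Fin m) → MTree m → ℝ
  | s, .leaf => Pe s
  | s, .node f => ∏ j, leafProd Pe (s ++ [j]) (f j)

/-- Probability that the posterior branching process (which, starting at the root, marks an
examined node s at depth < D as a leaf with probability P_{b,s} and otherwise adds all m of
its children, independently across nodes) produces the tree , rooted at context  with
remaining depth budget . -/
def postBranchProb {m : ℕ} (β : ℝ) (Pe : List (Fin m) → ℝ) :
    ℕ → List (Fin m) → MTree m → ℝ
  | 0, _, .leaf => 1
  | 0, _, .node _ => 0
  | D + 1, s, .leaf => pb β Pe (D + 1) s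
  | D + 1, s, .node f => (1 - pb β Pe (D + 1) s) * ∏ j, postBranchProb β Pe D (s ++ [j]) (f j)


namespace MTree

def internals {m : ℕ} : MTree m → ℕ
  | leaf => 0
  | node f => 1 + ∑ j, internals (f j)

lemma leavesAtDepth_le_numLeaves {m : ℕ} (T : MTree m) :
    ∀ d, T.leavesAtDepth d ≤ T.numLeaves := by
  induction T with
  | leaf => intro d; cases d <;> simp [leavesAtDepth, numLeaves]
  | node f ih =>
    intro d
    cases d with
    | zero => simp [leavesAtDepth]
    | succ d =>
      simp only [leavesAtDepth, numLeaves]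
      exact Finset.sum_le_sum fun j _ => ih j d

lemma numLeaves_eq {m : ℕ} (hm : 1 ≤ m) (T : MTree m) :
    T.numLeaves = (m - 1) * T.internals + 1 := by
  induction T with
  | leaf => simp [numLeaves, internals]
  | node f ih =>
    simp only [numLeaves, internals]
    rw [Finset.sum_congr rfl fun j _ => ih j]
    rw [Finset.sum_add_distrib, ← Finset.mul_sum]
    simp [Finset.card_univ, mul_add]
    cases m with
    | zero => omega
    | succ n => ring_nf; omega

lemma depth_children_le {m : ℕ} (f : Fin m → MTree m) (D : ℕ)
    (hd : (node f).depth ≤ D + 1) : ∀ j, (f j).depth ≤ D := by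
  intro j
  have h2 : (node f).depth = (Finset.univ.sup fun j => (f j).depth) + 1 := rfl
  have h : (f j).depth ≤ Finset.univ.sup fun j => (f j).depth :=
    Finset.le_sup (f := fun j => (f j).depth) (Finset.mem_univ j)
  omega

end MTree

lemma pw_pos {m : ℕ} (β : ℝ) (hβ : β ∈ Set.Ioo (0:ℝ) 1) (Pe : List (Fin m) → ℝ)
    (hPe : ∀ s, 0 < Pe s) : ∀ D s, 0 < pw β Pe D s := by
  intro D
  induction D with
  | zero => intro s; exact hPe s
  | succ D ih =>
    intro s
    have h1 : 0 < β * Pe s := mul_pos hβ.1 (hPe s)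
    have h2 : 0 < (1 - β) * ∏ j, pw β Pe D (s ++ [j]) :=
      mul_pos (by linarith [hβ.2]) (Finset.prod_pos fun j _ => ih _)
    have : 0 < β * Pe s + (1 - β) * ∏ j, pw β Pe D (s ++ [j]) := add_pos h1 h2
    simpa [pw] using this

lemma keyA {m : ℕ} (β : ℝ) (hβ : β ∈ Set.Ioo (0:ℝ) 1) (Pe : List (Fin m) → ℝ)
    (hPe : ∀ s, 0 < Pe s) :
    ∀ (T : MTree m) (D : ℕ) (s : List (Fin m)), T.depth ≤ D →
      postBranchProb β Pe D s T * pw β Pe D s = gwStopped β D T * leafProd Pe s T := by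
  intro T
  induction T with
  | leaf =>
    intro D s _
    cases D with
    | zero => simp [postBranchProb, pw, gwStopped, leafProd]
    | succ D =>
      have hpw := pw_pos β hβ Pe hPe (D+1) s
      simp only [postBranchProb, gwStopped, leafProd, pb]
      field_simp
  | node f ih =>
    intro D s hd
    cases D with
    | zero => simp [MTree.depth] at hd
    | succ D =>
      have hd' := MTree.depth_children_le f D hd
      have hpw := pw_pos β hβ Pe hPe (D+1) s
      have hpb : (1 - pb β Pe (D+1) s) * pw β Pe (D+1) s =
          (1 - β) * ∏ j, pw β Pe D (s ++ [j]) := by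
        rw [pb]
        rw [sub_mul, one_mul, div_mul_cancel₀ _ (ne_of_gt hpw)]
        rw [pw]; ring
      calc postBranchProb β Pe (D+1) s (.node f) * pw β Pe (D+1) s
          = ((1 - pb β Pe (D+1) s) * pw β Pe (D+1) s) *
              ∏ j, postBranchProb β Pe D (s ++ [j]) (f j) := by
            rw [postBranchProb]; ring
        _ = (1 - β) * ∏ j, (postBranchProb β Pe D (s ++ [j]) (f j) * pw β Pe D (s ++ [j])) := by
            rw [hpb, Finset.prod_mul_distrib]; ring
        _ = (1 - β) * ∏ j, (gwStopped β D (f j) * leafProd Pe (s ++ [j]) (f j)) := by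
            exact congrArg _ (Finset.prod_congr rfl fun j _ => ih j D (s++[j]) (hd' j))
        _ = gwStopped β (D+1) (.node f) * leafProd Pe s (.node f) := by
            rw [gwStopped, leafProd, Finset.prod_mul_distrib]; ring

lemma gw_eq_pow {m : ℕ} (β : ℝ) :
    ∀ (T : MTree m) (D : ℕ), T.depth ≤ D →
      gwStopped β D T = (1 - β) ^ T.internals * β ^ (T.numLeaves - T.leavesAtDepth D) := by
  intro T
  induction T with
  | leaf =>
    intro D _
    cases D with
    | zero => simp [gwStopped, MTree.internals, MTree.numLeaves, MTree.leavesAtDepth]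
    | succ D => simp [gwStopped, MTree.internals, MTree.numLeaves, MTree.leavesAtDepth]
  | node f ih =>
    intro D hd
    cases D with
    | zero => simp [MTree.depth] at hd
    | succ D =>
      have hd' := MTree.depth_children_le f D hd
      have hsub : ∑ j, ((f j).numLeaves - (f j).leavesAtDepth D) =
          (∑ j, (f j).numLeaves) - ∑ j, (f j).leavesAtDepth D :=
        Finset.sum_tsub_distrib _ fun j _ => (f j).leavesAtDepth_le_numLeaves D
      rw [gwStopped, Finset.prod_congr rfl fun j _ => ih j D (hd' j), Finset.prod_mul_distrib,
        Finset.prod_pow_eq_pow_sum, Finset.prod_pow_eq_pow_sum]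
      show _ = (1-β) ^ (MTree.internals (.node f)) *
        β ^ (MTree.numLeaves (.node f) - MTree.leavesAtDepth (.node f) (D+1))
      simp only [MTree.internals, MTree.numLeaves, MTree.leavesAtDepth]
      rw [← hsub, pow_add, pow_one]
      ring

lemma prior_eq_gw {m : ℕ} (hm : 2 ≤ m) (β : ℝ) (hβ : β ∈ Set.Ioo (0:ℝ) 1)
    (T : MTree m) (D : ℕ) (hT : T.depth ≤ D) :
    priorBCT m D β T = gwStopped β D T := by
  rw [gw_eq_pow β T D hT, priorBCT]
  congr 1
  have hL : T.numLeaves = (m-1) * T.internals + 1 := T.numLeaves_eq (by omega)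
  have h1 : T.numLeaves - 1 = (m-1) * T.internals := by omega
  rw [h1]
  have hx : (0:ℝ) ≤ 1 - β := by linarith [hβ.2]
  rw [← Real.rpow_natCast ((1-β) ^ (((m:ℝ)-1)⁻¹)) ((m-1)*T.internals),
      ← Real.rpow_natCast (1-β) T.internals, ← Real.rpow_mul hx]
  congr 1
  rw [Nat.cast_mul, Nat.cast_sub (by omega : 1 ≤ m), Nat.cast_one]
  have hm1 : ((m:ℝ) - 1) ≠ 0 := by
    have : (2:ℝ) ≤ (m:ℝ) := by exact_mod_cast hm
    linarith
  field_simp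

/-- the posterior branching process generates any tree T in T(D) with
probability exactly the Bayesian posterior
pi(T|x) = prior(T;beta) * prod_{s in T} P_{e,s} / P_{w,root}. -/
theorem postBranchProb_eq_posterior {m : ℕ} (hm : 2 ≤ m) (D : ℕ) (β : ℝ)
    (hβ : β ∈ Set.Ioo (0 : ℝ) 1) (Pe : List (Fin m) → ℝ) (hPe : ∀ s, 0 < Pe s)
    (T : MTree m) (hT : T.depth ≤ D) :
    postBranchProb β Pe D [] T =
      priorBCT m D β T * leafProd Pe [] T / pw β Pe D [] := by
  have h := keyA β hβ Pe hPe T D [] hT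
  have hpw := pw_pos β hβ Pe hPe D []
  rw [prior_eq_gw hm β hβ T D hT, eq_div_iff (ne_of_gt hpw)]
  exact h

end
end
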